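/- If p ∈ ℝ^d is a maximizer (i.e. all entries of p are positive, p_1 = 1, and min_{w ∈ W_d} G(p,w) ≥ min_{w ∈ W_d} G(q,w) for every q in the positive orthant), then D_1(p) = max_{k ∈ {1,...,d}} D_k(p). -/

import Mathlib

/-!
If `D_k(p) > D_1(p)`, raise `p_1` to `x > p_1` chosen so that `D_1` becomes `D_k(p)`. The first
coordinate carries weight only in `w^(1)`, so `G(·, w)` gets multiplied by `x / p_1` for every other
`w ∈ W_d`, while `G(·, w^(1))` becomes `x / p_1 · G(p, w^(k))`. Hence `min_w G` grows by the factor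
`x / p_1 > 1`, and `p` is not a maximizer.
-/

def wvec (d : ℕ) (j : Fin d) : Fin d → ℕ :=
  fun i => if i < j then 0 else if i = j then (j : ℕ) + 1 else (i : ℕ)

noncomputable def G (d : ℕ) (p : Fin d → ℝ) (w : Fin d → ℕ) : ℝ :=
  (∏ i, p i) / (Real.sqrt (∑ i, ((w i : ℝ)) ^ 2 * p i ^ 2)) ^ d

noncomputable def minG (d : ℕ) (p : Fin d → ℝ) : ℝ :=
  ⨅ j : Fin d, G d p (wvec d j)

noncomputable def D (d : ℕ) (j : Fin d) (p : Fin d → ℝ) : ℝ :=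
  Real.sqrt (∑ i, ((wvec d j i : ℝ)) ^ 2 * p i ^ 2)

noncomputable def pstar (d : ℕ) : Fin d → ℝ :=
  fun i => if (i : ℕ) = 0 then 1 else if (i : ℕ) = 1 then 1 / Real.sqrt 3
    else Real.sqrt (2 / 3) / ((i : ℕ) : ℝ)

open Finset Function

section

variable {d : ℕ} {p : Fin d → ℝ}

lemma wvec_eq_zero_of_lt {i j : Fin d} (h : i < j) : wvec d j i = 0 := by
  simp [wvec, h]

lemma wvec_self (j : Fin d) : wvec d j j = (j : ℕ) + 1 := by
  simp [wvec]

lemma prod_update_eq_div_mul {i : Fin d} (hpi : p i ≠ 0) (x : ℝ) :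
    ∏ k, update p i x k = x / p i * ∏ k, p k := by
  rw [prod_update_of_mem (mem_univ i), ← mul_prod_erase univ p (mem_univ i),
    sdiff_singleton_eq_erase]
  field_simp

lemma G_update_of_weight_eq_zero {w : Fin d → ℕ} {i : Fin d} (hpi : p i ≠ 0) (hw : w i = 0)
    (x : ℝ) : G d (update p i x) w = x / p i * G d p w := by
  have hsum : ∑ k, ((w k : ℝ)) ^ 2 * update p i x k ^ 2 = ∑ k, ((w k : ℝ)) ^ 2 * p k ^ 2 := by
    refine sum_congr rfl fun k _ => ?_
    rcases eq_or_ne k i with rfl | hk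
    · simp [hw]
    · rw [update_of_ne hk]
  rw [G, G, hsum, prod_update_eq_div_mul hpi, mul_div_assoc]

lemma G_wvec_eq (j : Fin d) (p : Fin d → ℝ) : G d p (wvec d j) = (∏ i, p i) / D d j p ^ d := rfl

lemma sq_D (j : Fin d) (p : Fin d → ℝ) : D d j p ^ 2 = ∑ i, ((wvec d j i : ℝ)) ^ 2 * p i ^ 2 :=
  Real.sq_sqrt (sum_nonneg fun _ _ => by positivity)

lemma sq_D_update (j i : Fin d) (x : ℝ) :
    D d j (update p i x) ^ 2 = D d j p ^ 2 + ((wvec d j i : ℝ)) ^ 2 * (x ^ 2 - p i ^ 2) := by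
  rw [sq_D, sq_D, ← sub_eq_iff_eq_add', ← sum_sub_distrib, sum_eq_single i]
  · simp only [update_self]
    ring
  · intro k _ hk
    simp [update_of_ne hk]
  · simp

lemma D_pos (hp : ∀ i, 0 < p i) (j : Fin d) : 0 < D d j p := by
  refine Real.sqrt_pos.2 (sum_pos' (fun _ _ => by positivity) ⟨j, mem_univ j, ?_⟩)
  have := hp j
  rw [wvec_self]
  positivity

lemma minG_le_G (p : Fin d → ℝ) (j : Fin d) : minG d p ≤ G d p (wvec d j) :=
  ciInf_le (Finite.bddBelow_range _) j

lemma minG_pos [NeZero d] (hp : ∀ i, 0 < p i) : 0 < minG d p := by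
  obtain ⟨j, hj⟩ := Finite.exists_min fun j : Fin d => G d p (wvec d j)
  have hmin : minG d p = G d p (wvec d j) := le_antisymm (minG_le_G p j) (le_ciInf hj)
  rw [hmin, G_wvec_eq]
  have := D_pos hp j
  exact div_pos (prod_pos fun i _ => hp i) (by positivity)

theorem exists_minG_lt_of_D_lt (hd : 0 < d) (hp : ∀ i, 0 < p i) {k : Fin d}
    (hk : D d ⟨0, hd⟩ p < D d k p) : ∃ q : Fin d → ℝ, (∀ i, 0 < q i) ∧ minG d p < minG d q := by
  have : NeZero d := ⟨hd.ne'⟩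
  set z : Fin d := ⟨0, hd⟩
  set x := √(p z ^ 2 + (D d k p ^ 2 - D d z p ^ 2))
  have hgap : 0 < D d k p ^ 2 - D d z p ^ 2 := by nlinarith [D_pos hp z]
  have hx : p z < x := (Real.lt_sqrt (hp z).le).2 (by linarith)
  set q := update p z x
  have hq : ∀ i, 0 < q i := by
    intro i
    rcases eq_or_ne i z with rfl | hi
    · simpa [q] using (hp z).trans hx
    · simpa [q, update_of_ne hi] using hp i
  have hDq : D d z q = D d k p := by
    rw [← sq_eq_sq₀ (D_pos hq z).le (D_pos hp k).le, sq_D_update, wvec_self,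
      Real.sq_sqrt (by positivity)]
    push_cast
    ring
  have hratio : 1 < x / p z := (one_lt_div (hp z)).2 hx
  have hscale : x / p z * minG d p ≤ minG d q := by
    refine le_ciInf fun j => ?_
    rcases eq_or_ne j z with rfl | hj
    · calc x / p z * minG d p ≤ x / p z * G d p (wvec d k) := by
            gcongr
            exact minG_le_G p k
        _ = G d q (wvec d z) := by
            rw [G_wvec_eq, G_wvec_eq, hDq, prod_update_eq_div_mul (hp z).ne', mul_div_assoc]
    · have hzj : z < j := Fin.lt_def.2 (Nat.pos_of_ne_zero fun h => hj (Fin.ext h))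
      rw [G_update_of_weight_eq_zero (hp z).ne' (wvec_eq_zero_of_lt hzj)]
      gcongr
      exact minG_le_G p j
  exact ⟨q, hq, (lt_mul_of_one_lt_left (minG_pos hp) hratio).trans_le hscale⟩

end

/-- If `p` is a maximizer (positive, `p_1 = 1`, maximizing `min_{w ∈ W_d} G(·,w)`
over the positive orthant), then `D_1(p) = max_{k ∈ {1,…,d}} D_k(p)`. -/
theorem stmt5 (d : ℕ) (hd : 2 ≤ d) (p : Fin d → ℝ)
    (hp : ∀ i, 0 < p i)
    (hmax : ∀ q : Fin d → ℝ, (∀ i, 0 < q i) → minG d q ≤ minG d p) :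
    IsGreatest (Set.range fun k : Fin d => D d k p) (D d ⟨0, by omega⟩ p) := by
  refine ⟨⟨_, rfl⟩, ?_⟩
  rintro _ ⟨k, rfl⟩
  by_contra! hk
  obtain ⟨q, hq, hlt⟩ := exists_minG_lt_of_D_lt (by omega) hp hk
  exact (hmax q hq).not_gt hlt
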